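/- arXiv:2208.09943 — 2 statements merged into one kernel-verified Lean document; each statement's English description precedes it below -/
import Mathlib

section
/- Let B ⊆ A be a regular inclusion of C*-algebras with the ideal intersection property, N a *-semigroup of normalizers with dense span, and E : A → B a faithful N-invariant conditional expectation. For every regular ideal J of A, the quotient inclusion B/(J ∩ B) ⊆ A/J has the ideal intersection property. -/
/-- Two-sided annihilator of a subset of an algebra. -/
def ann {A : Type*} [NonUnitalNonAssocSemiring A] (X : Set A) : Set A :=
  {a | ∀ x ∈ X, a * x = 0 ∧ x * a = 0}

/-- A (not necessarily closed) two-sided ideal, as a subset. -/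
def IsAlgIdeal {A : Type*} [NonUnitalNonAssocSemiring A] (J : Set A) : Prop :=
  (0 : A) ∈ J ∧ (∀ x ∈ J, ∀ y ∈ J, x + y ∈ J) ∧ ∀ a : A, ∀ x ∈ J, a * x ∈ J ∧ x * a ∈ J

/-- A closed two-sided ideal. -/
def IsIdeal {A : Type*} [NonUnitalNormedRing A] (J : Set A) : Prop :=
  IsAlgIdeal J ∧ IsClosed J

/-- A regular ideal: a closed two-sided ideal equal to its double annihilator. -/
def IsRegularIdeal {A : Type*} [NonUnitalNormedRing A] (J : Set A) : Prop :=
  IsIdeal J ∧ J = ann (ann J)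

variable {A : Type*} [NonUnitalNormedRing A] [StarRing A] [CStarRing A] [CompleteSpace A]
  [NormedSpace ℂ A] [IsScalarTower ℂ A A] [SMulCommClass ℂ A A] [StarModule ℂ A]
  [PartialOrder A] [StarOrderedRing A]

/-- `B` is a (non-unital, closed, star-closed) C*-subalgebra of `A`. -/
def IsCStarSubalgebra (B : Set A) : Prop :=
  (0 : A) ∈ B ∧ (∀ x ∈ B, ∀ y ∈ B, x + y ∈ B) ∧ (∀ x ∈ B, ∀ y ∈ B, x * y ∈ B) ∧
  (∀ (c : ℂ), ∀ x ∈ B, c • x ∈ B) ∧ (∀ x ∈ B, star x ∈ B) ∧ IsClosed B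

/-- `B` contains an approximate unit for `A`. -/
def ContainsApproxUnit (B : Set A) : Prop :=
  ∀ a : A, ∀ ε > (0 : ℝ), ∃ b ∈ B, ‖b‖ ≤ 1 ∧ ‖a - b * a‖ < ε ∧ ‖a - a * b‖ < ε

/-- `B ⊆ A` is an inclusion of C*-algebras: a C*-subalgebra containing an
approximate unit for `A`. -/
def IsCStarInclusion (B : Set A) : Prop :=
  IsCStarSubalgebra B ∧ ContainsApproxUnit B

/-- `n` is a normalizer of `B` in `A`: `nBn* ⊆ B` and `n*Bn ⊆ B`. -/
def IsNormalizer (B : Set A) (n : A) : Prop :=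
  (∀ b ∈ B, n * b * star n ∈ B) ∧ (∀ b ∈ B, star n * b * n ∈ B)

/-- `B ⊆ A` is a regular inclusion: an inclusion whose normalizers span a dense
subspace of `A`. -/
def IsRegularInclusion (B : Set A) : Prop :=
  IsCStarInclusion B ∧
  closure (Submodule.span ℂ {n | IsNormalizer B n} : Set A) = Set.univ

/-- `E : A → A` is a conditional expectation onto `B`. -/
def IsCondExp (B : Set A) (E : A → A) : Prop :=
  (∀ a, E a ∈ B) ∧ (∀ b ∈ B, E b = b) ∧
  (∀ x y, E (x + y) = E x + E y) ∧ (∀ (c : ℂ) (x : A), E (c • x) = c • E x) ∧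
  (∀ a : A, 0 ≤ a → 0 ≤ E a) ∧ (∀ a, ‖E a‖ ≤ ‖a‖) ∧
  (∀ b ∈ B, ∀ a, E (b * a) = b * E a ∧ E (a * b) = E a * b)

/-- Faithfulness of a positive map: `E(a*a) = 0 → a = 0`. -/
def IsFaithful (E : A → A) : Prop := ∀ a, E (star a * a) = 0 → a = 0

/-- `N` is a `*`-semigroup of normalizers of `B` with dense linear span in `A`. -/
def IsNormalizerSemigroup (B N : Set A) : Prop :=
  (∀ n ∈ N, IsNormalizer B n) ∧ (∀ n ∈ N, star n ∈ N) ∧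
  (∀ m ∈ N, ∀ n ∈ N, m * n ∈ N) ∧
  closure (Submodule.span ℂ N : Set A) = Set.univ

/-- `K` is invariant under `N`: `nKn* ⊆ K` for all `n ∈ N`. -/
def InvariantUnder (N K : Set A) : Prop := ∀ n ∈ N, ∀ k ∈ K, n * k * star n ∈ K

/-- `E` is `N`-invariant: `E(nan*) = nE(a)n*` for all `n ∈ N`. -/
def IsInvariantCondExp (N : Set A) (E : A → A) : Prop :=
  ∀ n ∈ N, ∀ a : A, E (n * a * star n) = n * E a * star n

/-- A closed two-sided ideal of the subalgebra `B`. -/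
def IsIdealIn (B K : Set A) : Prop :=
  K ⊆ B ∧ (0 : A) ∈ K ∧ (∀ x ∈ K, ∀ y ∈ K, x + y ∈ K) ∧
  (∀ b ∈ B, ∀ x ∈ K, b * x ∈ K ∧ x * b ∈ K) ∧ IsClosed K

/-- A regular ideal of the subalgebra `B`: `K = K^{⊥_B ⊥_B}` with annihilators
computed inside `B`. -/
def IsRegularIdealIn (B K : Set A) : Prop :=
  IsIdealIn B K ∧ K = ann (ann K ∩ B) ∩ B

/-- `B ⊆ A` has the ideal intersection property. -/
def HasIIP (B : Set A) : Prop :=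
  ∀ J : Set A, IsIdeal J → J ≠ {0} → ∃ x ∈ J ∩ B, x ≠ 0

/-- `B ⊆ A` has the regular ideal intersection property. -/
def HasRIIP (B : Set A) : Prop :=
  ∀ J : Set A, IsRegularIdeal J → J ≠ {0} → ∃ x ∈ J ∩ B, x ≠ 0

lemma isClosed_ann' {A : Type*} [NonUnitalNormedRing A] (X : Set A) : IsClosed (ann X) := by
  have h : ann X = ⋂ x ∈ X, ({a : A | a * x = 0} ∩ {a : A | x * a = 0}) := by
    ext a
    simp [ann, Set.mem_iInter, forall_and]
  rw [h]
  exact isClosed_biInter fun x _ =>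
    ((isClosed_eq (continuous_id.mul continuous_const) continuous_const).inter
      (isClosed_eq (continuous_const.mul continuous_id) continuous_const))

/-- If `B ⊆ A` is a regular inclusion with the ideal intersection property
admitting a faithful `N`-invariant conditional expectation, and `J` is a regular ideal of
`A`, then the quotient inclusion `B/(J ∩ B) ⊆ A/J` has the ideal intersection property.
(Ideals of `A/J` correspond to closed ideals `L` of `A` containing `J`; nontriviality of
`L/J` means `L ≠ J`, and nontrivial intersection with `B/(J ∩ B)` means some `b ∈ B ∩ L`
with `b ∉ J`.) -/
theorem quotient_IIP {B N : Set A} (hB : IsRegularInclusion B) (hIIP : HasIIP B)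
    (hN : IsNormalizerSemigroup B N) (E : A → A) (hE : IsCondExp B E)
    (hEf : IsFaithful E) (hEinv : IsInvariantCondExp N E)
    (J : Set A) (hJ : IsRegularIdeal J) :
    ∀ L : Set A, IsIdeal L → J ⊆ L → L ≠ J → ∃ b ∈ B, b ∈ L ∧ b ∉ J := by
  intro L hL hJL hLJ
  obtain ⟨⟨⟨hJ0, hJadd, hJmul⟩, hJclosed⟩, hJreg⟩ := hJ
  -- ann J is a closed two-sided ideal
  have hann0 : (0 : A) ∈ ann J := fun x _ => ⟨zero_mul x, mul_zero x⟩
  have hannmul : ∀ a : A, ∀ y ∈ ann J, a * y ∈ ann J ∧ y * a ∈ ann J := by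
    intro a y hy
    constructor
    · intro x hx
      constructor
      · rw [mul_assoc, (hy x hx).1, mul_zero]
      · rw [← mul_assoc]
        exact (hy (x * a) (hJmul a x hx).2).2
    · intro x hx
      constructor
      · rw [mul_assoc]
        exact (hy (a * x) (hJmul a x hx).1).1
      · rw [← mul_assoc, (hy x hx).2, zero_mul]
  -- K := L ∩ ann J is a closed two-sided ideal
  set K := L ∩ ann J with hKdef
  have hK : IsIdeal K := by
    refine ⟨⟨⟨hL.1.1, hann0⟩, ?_, ?_⟩, hL.2.inter (isClosed_ann' J)⟩
    · rintro x ⟨hxL, hxa⟩ y ⟨hyL, hya⟩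
      refine ⟨hL.1.2.1 x hxL y hyL, fun z hz => ?_⟩
      rw [add_mul, (hxa z hz).1, (hya z hz).1, add_zero, mul_add,
        (hxa z hz).2, (hya z hz).2, add_zero]
      exact ⟨rfl, rfl⟩
    · rintro a x ⟨hxL, hxa⟩
      exact ⟨⟨(hL.1.2.2 a x hxL).1, (hannmul a x hxa).1⟩,
        ⟨(hL.1.2.2 a x hxL).2, (hannmul a x hxa).2⟩⟩
  have hKne : K ≠ {0} := by
    intro h
    apply hLJ
    refine Set.Subset.antisymm (fun x hx => ?_) hJL
    rw [hJreg]
    intro y hy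
    constructor
    · have hxy : x * y ∈ K := ⟨(hL.1.2.2 y x hx).2, (hannmul x y hy).1⟩
      rw [h] at hxy; exact hxy
    · have hyx : y * x ∈ K := ⟨(hL.1.2.2 y x hx).1, (hannmul x y hy).2⟩
      rw [h] at hyx; exact hyx
  obtain ⟨b, ⟨⟨hbL, hbann⟩, hbB⟩, hbne⟩ := hIIP K hK hKne
  refine ⟨b, hbB, hbL, fun hbJ => hbne ?_⟩
  -- b ∈ J ∩ ann J forces b = 0 in a C*-algebra
  have h1 : b * star b ∈ J := (hJmul (star b) b hbJ).2
  have h2 : star b * (b * star b) ∈ J := (hJmul (star b) _ h1).1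
  have h3 : b * (star b * (b * star b)) = 0 := (hbann _ h2).1
  have hc2 : (b * star b) * (b * star b) = 0 := by
    rw [mul_assoc]; exact h3
  have hsa : star (b * star b) = b * star b := by rw [star_mul, star_star]
  have hcnorm : ‖b * star b‖ = 0 := by
    have hn := CStarRing.norm_star_mul_self (x := b * star b)
    rw [hsa, hc2, norm_zero] at hn
    exact mul_self_eq_zero.mp hn.symm
  have hb0 : ‖b‖ = 0 := by
    have hn := CStarRing.norm_self_mul_star (x := b)
    rw [hcnorm] at hn
    exact mul_self_eq_zero.mp hn.symm
  exact norm_eq_zero.mp hb0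
end

section
/- Let B ⊆ A be a regular inclusion of C*-algebras with the ideal intersection property, N a *-semigroup of normalizers with dense span, and E : A → B a faithful N-invariant conditional expectation. For a regular ideal J of A, the map A/J → B/(B ∩ J), a + J ↦ E(a) + (J ∩ B), is a well-defined faithful conditional expectation. -/
variable {A : Type*} [NonUnitalNormedRing A] [StarRing A] [CStarRing A] [CompleteSpace A]
  [NormedSpace ℂ A] [IsScalarTower ℂ A A] [SMulCommClass ℂ A A] [StarModule ℂ A]
  [PartialOrder A] [StarOrderedRing A]

open Set

section

variable {R : Type*}

/-- Unlike `ann S`, this is a two-sided ideal for every `S`. -/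
def leftAnnMul [NonUnitalNonAssocSemiring R] (S : Set R) : Set R :=
  {w | ∀ a : R, ∀ s ∈ S, w * a * s = 0}

variable [NonUnitalNormedRing R]

theorem IsIdeal.inter {I J : Set R} (hI : IsIdeal I) (hJ : IsIdeal J) : IsIdeal (I ∩ J) :=
  ⟨⟨⟨hI.1.1, hJ.1.1⟩, fun x hx y hy => ⟨hI.1.2.1 x hx.1 y hy.1, hJ.1.2.1 x hx.2 y hy.2⟩,
    fun a x hx => ⟨⟨(hI.1.2.2 a x hx.1).1, (hJ.1.2.2 a x hx.2).1⟩,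
      ⟨(hI.1.2.2 a x hx.1).2, (hJ.1.2.2 a x hx.2).2⟩⟩⟩, hI.2.inter hJ.2⟩

theorem isIdeal_ann {J : Set R} (hJ : ∀ a : R, ∀ x ∈ J, a * x ∈ J ∧ x * a ∈ J) :
    IsIdeal (ann J) := by
  refine ⟨⟨fun x _ => by simp, fun w hw v hv x hx => ?_, fun a w hw => ⟨fun x hx => ?_,
    fun x hx => ?_⟩⟩, ?_⟩
  · simp [add_mul, mul_add, (hw x hx).1, (hw x hx).2, (hv x hx).1, (hv x hx).2]
  · rw [mul_assoc, (hw x hx).1, mul_zero, ← mul_assoc]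
    exact ⟨rfl, (hw _ (hJ a x hx).2).2⟩
  · rw [mul_assoc, ← mul_assoc x, (hw x hx).2, zero_mul]
    exact ⟨(hw _ (hJ a x hx).1).1, rfl⟩
  · have : ann J = ⋂ x ∈ J, {w : R | w * x = 0} ∩ {w | x * w = 0} := by
      ext w; simp [ann, forall_and]
    rw [this]
    exact isClosed_biInter fun x _ =>
      (isClosed_eq (continuous_mul_const x) continuous_const).inter
        (isClosed_eq (continuous_const_mul x) continuous_const)

theorem isIdeal_leftAnnMul (S : Set R) : IsIdeal (leftAnnMul S) := by
  refine ⟨⟨fun a s _ => by simp, fun w hw v hv a s hs => ?_, fun b w hw => ⟨fun a s hs => ?_,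
    fun a s hs => ?_⟩⟩, ?_⟩
  · rw [add_mul, add_mul, hw a s hs, hv a s hs, add_zero]
  · rw [mul_assoc b, mul_assoc b, hw a s hs, mul_zero]
  · rw [mul_assoc w, hw _ s hs]
  · have : leftAnnMul S = ⋂ a, ⋂ s ∈ S, {w : R | w * a * s = 0} := by
      ext w; simp [leftAnnMul]
    rw [this]
    exact isClosed_iInter fun a => isClosed_biInter fun s _ =>
      isClosed_eq (by fun_prop) continuous_const

theorem mul_mul_eq_zero_of_dense (𝕜 : Type*) [NontriviallyNormedField 𝕜] [NormedSpace 𝕜 R]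
    [IsScalarTower 𝕜 R R] [SMulCommClass 𝕜 R R] {N : Set R}
    (hN : closure (Submodule.span 𝕜 N : Set R) = univ) {w k : R}
    (h : ∀ n ∈ N, w * n * k = 0) (a : R) : w * a * k = 0 := by
  have := ContinuousLinearMap.ext_on (f := ContinuousLinearMap.mulLeftRight 𝕜 R w k) (g := 0)
    (dense_iff_closure_eq.mpr hN) h
  simpa using DFunLike.congr_fun this a

theorem eq_zero_of_mem_leftAnnMul [StarRing R] [CStarRing R] {S : Set R} {q : R}
    (hqS : q ∈ S) (hq : q ∈ leftAnnMul S) : q = 0 := by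
  have hqq : star (star q * q) * (star q * q) = 0 := by
    rw [star_mul, star_star, mul_assoc, ← mul_assoc q, hq _ q hqS, mul_zero]
  exact (CStarRing.star_mul_self_eq_zero_iff q).1
    ((CStarRing.star_mul_self_eq_zero_iff _).1 hqq)

theorem HasIIP.leftAnnMul_subset [StarRing R] [CStarRing R] {B J : Set R} (hIIP : HasIIP B)
    (hJ : IsRegularIdeal J) : leftAnnMul (ann J ∩ B) ⊆ J := by
  set K := ann J ∩ B
  have hL := isIdeal_ann hJ.1.1.2.2
  have hW := isIdeal_leftAnnMul K
  have hP0 : ∀ z ∈ ann J ∩ leftAnnMul K, z = 0 := by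
    by_contra! ⟨z, hz, hz0⟩
    obtain ⟨q, ⟨⟨hqL, hq⟩, hqB⟩, hq0⟩ := hIIP _ (hL.inter hW) fun h => hz0 (by simpa [h] using hz)
    exact hq0 (eq_zero_of_mem_leftAnnMul (S := K) ⟨hqL, hqB⟩ hq)
  intro w hw
  rw [hJ.2]
  intro y hy
  exact And.intro (hP0 _ ⟨(hL.1.2.2 w y hy).1, (hW.1.2.2 y w hw).2⟩)
    (hP0 _ ⟨(hL.1.2.2 w y hy).2, (hW.1.2.2 y w hw).1⟩)

theorem IsInvariantCondExp.map_star_mul_mul [StarRing R] {N : Set R} {E : R → R}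
    (hEinv : IsInvariantCondExp N E) (hNstar : ∀ n ∈ N, star n ∈ N) {n : R} (hn : n ∈ N)
    (a : R) : E (star n * a * n) = star n * E a * n := by
  simpa using hEinv (star n) (hNstar n hn) a

namespace IsCondExp

variable [NormedSpace ℂ R] [PartialOrder R] {B : Set R} {E : R → R}

theorem map_zero (hE : IsCondExp B E) : E 0 = 0 := by
  simpa using hE.2.2.1 0 0

theorem map_sub (hE : IsCondExp B E) (x y : R) : E (x - y) = E x - E y :=
  eq_sub_of_add_eq (by rw [← hE.2.2.1, sub_add_cancel])

theorem map_mul_left (hE : IsCondExp B E) {b : R} (hb : b ∈ B) (a : R) : E (b * a) = b * E a :=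
  (hE.2.2.2.2.2.2 b hb a).1

theorem map_mul_right (hE : IsCondExp B E) {b : R} (hb : b ∈ B) (a : R) : E (a * b) = E a * b :=
  (hE.2.2.2.2.2.2 b hb a).2

variable [StarRing R]

theorem map_star_mul_mul (hE : IsCondExp B E) (hBstar : ∀ x ∈ B, star x ∈ B) {k : R}
    (hk : k ∈ B) (a : R) : E (star k * a * k) = star k * E a * k := by
  rw [hE.map_mul_right hk, hE.map_mul_left (hBstar k hk)]

theorem mem_leftAnnMul [IsScalarTower ℂ R R] [SMulCommClass ℂ R R] {N : Set R}
    (hE : IsCondExp B E) (hEf : IsFaithful E) (hBstar : ∀ x ∈ B, star x ∈ B)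
    (hN : closure (Submodule.span ℂ N : Set R) = univ) {K : Set R} (hKB : K ⊆ B) {w : R}
    (hw : ∀ n ∈ N, ∀ k ∈ K, E (star n * (star w * w) * n) * k = 0) : w ∈ leftAnnMul K := by
  refine fun a k hk => mul_mul_eq_zero_of_dense ℂ hN (fun n hn => hEf _ ?_) a
  calc E (star (w * n * k) * (w * n * k)) = E (star k * (star n * (star w * w) * n) * k) := by
        simp only [star_mul]; noncomm_ring
    _ = 0 := by rw [hE.map_star_mul_mul hBstar (hKB hk), mul_assoc, hw n hn k hk, mul_zero]

theorem map_mem_leftAnnMul [IsScalarTower ℂ R R] [SMulCommClass ℂ R R] {N J : Set R}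
    (hE : IsCondExp B E) (hEf : IsFaithful E) (hEinv : IsInvariantCondExp N E)
    (hBstar : ∀ x ∈ B, star x ∈ B) (hNstar : ∀ n ∈ N, star n ∈ N)
    (hN : closure (Submodule.span ℂ N : Set R) = univ)
    (hJ : ∀ a : R, ∀ x ∈ J, a * x ∈ J ∧ x * a ∈ J) {x : R} (hx : x ∈ J) :
    E x ∈ leftAnnMul (ann J ∩ B) := by
  refine hE.mem_leftAnnMul hEf hBstar hN inter_subset_right fun n hn k hk => ?_
  have hj : star n * (star (E x) * x) * n ∈ J := (hJ _ _ (hJ _ _ (hJ _ _ hx).1).1).2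
  calc E (star n * (star (E x) * E x) * n) * k = E (star n * (star (E x) * x) * n) * k := by
        rw [← hE.map_mul_left (hBstar _ (hE.1 x)), hEinv.map_star_mul_mul hNstar hn,
          hEinv.map_star_mul_mul hNstar hn, hE.2.1 _ (hE.1 _)]
    _ = 0 := by rw [← hE.map_mul_right hk.2, (hk.1 _ hj).2, hE.map_zero]

theorem mem_leftAnnMul_of_map_star_mul_self_mem [IsScalarTower ℂ R R] [SMulCommClass ℂ R R]
    {N J : Set R} (hE : IsCondExp B E) (hEf : IsFaithful E) (hEinv : IsInvariantCondExp N E)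
    (hBstar : ∀ x ∈ B, star x ∈ B) (hNstar : ∀ n ∈ N, star n ∈ N)
    (hN : closure (Submodule.span ℂ N : Set R) = univ)
    (hJ : ∀ a : R, ∀ x ∈ J, a * x ∈ J ∧ x * a ∈ J) {a : R} (ha : E (star a * a) ∈ J) :
    a ∈ leftAnnMul (ann J ∩ B) := by
  refine hE.mem_leftAnnMul hEf hBstar hN inter_subset_right fun n hn k hk => ?_
  rw [hEinv.map_star_mul_mul hNstar hn]
  exact (hk.1 _ (hJ _ _ (hJ _ _ ha).1).2).2

end IsCondExp

end

/-- For a regular ideal `J` of `A`, the map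
`A/J → B/(B ∩ J)`, `a + J ↦ E(a) + (J ∩ B)`, is a well-defined faithful conditional
expectation: the assignment is well defined (`a₁ - a₂ ∈ J ⟹ E a₁ - E a₂ ∈ J ∩ B`, in
particular `E(J) ⊆ J ∩ B`), and the induced map is faithful
(`E(a*a) ∈ J ⟹ a ∈ J`). -/
theorem quotient_condExp {B N : Set A} (hB : IsRegularInclusion B) (hIIP : HasIIP B)
    (hN : IsNormalizerSemigroup B N) (E : A → A) (hE : IsCondExp B E)
    (hEf : IsFaithful E) (hEinv : IsInvariantCondExp N E)
    (J : Set A) (hJ : IsRegularIdeal J) :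
    (∀ a₁ a₂ : A, a₁ - a₂ ∈ J → E a₁ - E a₂ ∈ J ∩ B) ∧
    (∀ a ∈ J, E a ∈ J ∩ B) ∧
    (∀ a : A, E (star a * a) ∈ J → a ∈ J) := by
  have hBstar : ∀ x ∈ B, star x ∈ B := hB.1.1.2.2.2.2.1
  have hEJ : ∀ x ∈ J, E x ∈ J ∩ B := fun x hx =>
    ⟨hIIP.leftAnnMul_subset hJ <|
      hE.map_mem_leftAnnMul hEf hEinv hBstar hN.2.1 hN.2.2.2 hJ.1.1.2.2 hx, hE.1 x⟩
  refine ⟨fun a₁ a₂ h => hE.map_sub a₁ a₂ ▸ hEJ _ h, hEJ, fun a ha => ?_⟩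
  exact hIIP.leftAnnMul_subset hJ <|
    hE.mem_leftAnnMul_of_map_star_mul_self_mem hEf hEinv hBstar hN.2.1 hN.2.2.2 hJ.1.1.2.2 ha
end
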